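/- (Lemma 2.1(1)) Assume conditions A1–A5 hold for (S̄, η̄). If ρ̄ ⊴ η̄ is an avoidable ladder system, then dom(ρ̄) is S̄-small. -/

import Mathlib

open Set

/-- ω₁, the first uncountable ordinal. -/
noncomputable def omegaOne : Ordinal := (Cardinal.aleph 1).ord

/-- ω₂, the second uncountable ordinal. -/
noncomputable def omegaTwo : Ordinal := (Cardinal.aleph 2).ord

/-- The set of countable ordinals, i.e. ω₁ viewed as a set of ordinals. -/
def omegaOneSet : Set Ordinal := {o | o < omegaOne}

/-- `A ⊆* B` iff `A \ B` is finite. -/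
def AlmostSubset (A B : Set Ordinal) : Prop := (A \ B).Finite

/-- `A =* B` iff `A ⊆* B` and `B ⊆* A`. -/
def AlmostEq (A B : Set Ordinal) : Prop := AlmostSubset A B ∧ AlmostSubset B A

/-- A club subset of ω₁: a set of countable ordinals, unbounded in ω₁ and
closed (every nonzero δ < ω₁ which is a limit of members is a member). -/
def IsClubSet (C : Set Ordinal) : Prop :=
  C ⊆ omegaOneSet ∧
  (∀ a < omegaOne, ∃ b ∈ C, a < b) ∧
  (∀ δ, δ ≠ 0 → δ < omegaOne → (∀ a < δ, ∃ b ∈ C, a < b ∧ b < δ) → δ ∈ C)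

/-- A stationary subset of ω₁: one meeting every club. -/
def Stationary (S : Set Ordinal) : Prop := ∀ C, IsClubSet C → (S ∩ C).Nonempty

/-- A ladder system: for each δ in the domain (a set of countable limit ordinals),
a strictly increasing ω-sequence cofinal in δ. -/
structure Ladder where
  dom : Set Ordinal
  toFun : Ordinal → ℕ → Ordinal
  dom_lt : ∀ δ ∈ dom, δ < omegaOne
  mono : ∀ δ ∈ dom, StrictMono (toFun δ)
  lt : ∀ δ ∈ dom, ∀ n, toFun δ n < δ
  cofinal : ∀ δ ∈ dom, ∀ a < δ, ∃ n, a < toFun δ n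

/-- `[η_δ]`, the range of the ladder at δ. -/
def Ladder.lad (η : Ladder) (δ : Ordinal) : Set Ordinal := Set.range (η.toFun δ)

/-- The restriction `η̄↾A`, with domain `dom(η̄) ∩ A`. -/
def Ladder.restrict (η : Ladder) (A : Set Ordinal) : Ladder where
  dom := η.dom ∩ A
  toFun := η.toFun
  dom_lt := fun δ h => η.dom_lt δ h.1
  mono := fun δ h => η.mono δ h.1
  lt := fun δ h => η.lt δ h.1
  cofinal := fun δ h => η.cofinal δ h.1

/-- η̄ is club-guessing iff every club C has some δ ∈ dom(η̄) with `[η_δ] ⊆* C`. -/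
def ClubGuessing (η : Ladder) : Prop :=
  ∀ C, IsClubSet C → ∃ δ ∈ η.dom, AlmostSubset (η.lad δ) C

/-- η̄ is strongly club-guessing iff for every club C there is a club D with
`[η_δ] ⊆* C` for all δ ∈ D ∩ dom(η̄). -/
def StronglyGuessing (η : Ladder) : Prop :=
  ∀ C, IsClubSet C → ∃ D, IsClubSet D ∧ ∀ δ ∈ D ∩ η.dom, AlmostSubset (η.lad δ) C

/-- A club C avoids η̄ iff `[η_δ] ∩ C` is finite for every δ ∈ dom(η̄) outside
some non-stationary set. -/
def Avoids (C : Set Ordinal) (η : Ladder) : Prop :=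
  IsClubSet C ∧ ∃ N : Set Ordinal, ¬ Stationary N ∧
    ∀ δ ∈ η.dom, δ ∉ N → (η.lad δ ∩ C).Finite

/-- η̄ is avoidable iff some club avoids it. -/
def Avoidable (η : Ladder) : Prop := ∃ C, Avoids C η

/-- A set S ⊆ ω₁ is avoidable iff every ladder system over S is avoidable. -/
def AvoidableSet (S : Set Ordinal) : Prop := ∀ η : Ladder, η.dom ⊆ S → Avoidable η

/-- Two ladders are almost disjoint iff for some club C, `[η_δ] ∩ [μ_δ]` is finite
for every δ ∈ C ∩ dom(η̄) ∩ dom(μ̄). -/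
def AlmostDisjoint (η μ : Ladder) : Prop :=
  ∃ C, IsClubSet C ∧ ∀ δ ∈ C ∩ (η.dom ∩ μ.dom), (η.lad δ ∩ μ.lad δ).Finite

/-- `η̄ ⊴ μ̄` : η̄ is a subladder of μ̄. -/
def Subladder (η μ : Ladder) : Prop :=
  ∃ C, IsClubSet C ∧ C ∩ η.dom ⊆ μ.dom ∧
    ∀ δ ∈ C ∩ η.dom, AlmostSubset (η.lad δ) (μ.lad δ)

/-- η̄ is maximal for X iff dom(η̄) ⊆ X, η̄ is strongly club-guessing, and every
ladder system over X almost disjoint from η̄ is avoidable. -/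
def LadderMaximalFor (η : Ladder) (X : Set Ordinal) : Prop :=
  η.dom ⊆ X ∧ StronglyGuessing η ∧
    ∀ μ : Ladder, μ.dom ⊆ X → AlmostDisjoint μ η → Avoidable μ

/-- The diagonal union `∇_ξ A_ξ = {α < ω₁ : ∃ ξ < α, α ∈ A_ξ}`. -/
def diagUnion (A : Ordinal → Set Ordinal) : Set Ordinal :=
  {α | α < omegaOne ∧ ∃ ξ < α, α ∈ A ξ}

/-- H is S̄-small iff the set of i < ω₂ with H ∩ S_i stationary has size ≤ ℵ₁. -/
def SSmall (S : Ordinal → Set Ordinal) (H : Set Ordinal) : Prop :=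
  Cardinal.mk {i : Ordinal // i < omegaTwo ∧ Stationary (H ∩ S i)} ≤
    Cardinal.lift.{1,0} (Cardinal.aleph 1 : Cardinal.{0})

/-- Conditions A1–A5 for (S̄, η̄), with χ the family of maximal ladders from A3. -/
def CondA (S : Ordinal → Set Ordinal) (η : Ladder) (χ : Ordinal → Ladder) : Prop :=
  (∀ i < omegaTwo, S i ⊆ omegaOneSet ∧ Stationary (S i)) ∧
  (∀ i < omegaTwo, ∀ j < omegaTwo, i ≠ j → ¬ Stationary (S i ∩ S j)) ∧
  -- A1
  (∀ i < omegaTwo, S i ⊆ η.dom) ∧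
  -- A2
  (∀ μ : Ladder, AlmostDisjoint μ η → Avoidable μ) ∧
  -- A3
  (∀ i < omegaTwo, (χ i).dom = S i ∧ LadderMaximalFor (χ i) (S i)) ∧
  -- A4
  (∀ X : Set Ordinal, X ⊆ omegaOneSet →
      (∀ i < omegaTwo, ¬ Stationary (X ∩ S i)) → AvoidableSet X) ∧
  -- A5
  (∀ X : Set Ordinal, X ⊆ omegaOneSet → ¬ SSmall S X →
      ∀ ρ : Ladder, ρ.dom = X → Subladder ρ η →
        ∃ i, i < omegaTwo ∧ S i ⊆ X ∧ Subladder (χ i) ρ)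


universe u in
theorem isClub_inter {C D : Set Ordinal.{u}} (hC : IsClubSet C) (hD : IsClubSet D) :
    IsClubSet (C ∩ D) := by
  obtain ⟨hCs, hCu, hCc⟩ := hC
  obtain ⟨hDs, hDu, hDc⟩ := hD
  refine ⟨fun x hx => hCs hx.1, ?_, ?_⟩
  · intro a ha
    choose fC hfC1 hfC2 using hCu
    choose fD hfD1 hfD2 using hDu
    set g : Ordinal → Ordinal := fun b =>
      if h : b < omegaOne then fD (fC b h) (hCs (hfC1 b h)) else 0 with hg
    have step : ∀ b, b < omegaOne → g b ∈ D ∧ b < g b ∧ ∃ c ∈ C, b < c ∧ c < g b := by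
      intro b h
      have : g b = fD (fC b h) (hCs (hfC1 b h)) := by simp [hg, h]
      rw [this]
      exact ⟨hfD1 _ _, lt_trans (hfC2 b h) (hfD2 _ _), fC b h, hfC1 b h, hfC2 b h, hfD2 _ _⟩
    set x : ℕ → Ordinal := fun n => g^[n] a with hx
    have x0 : x 0 = a := rfl
    have xs : ∀ n, x (n + 1) = g (x n) := by
      intro n; simp [hx, Function.iterate_succ_apply']
    have xlt : ∀ n, x n < omegaOne := by
      intro n
      induction n with
      | zero => exact ha
      | succ n ih => rw [xs]; exact hDs (step (x n) ih).1
    have xmono : ∀ n, x n < x (n + 1) := fun n => by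
      rw [xs]; exact (step (x n) (xlt n)).2.1
    set y : ULift.{u} ℕ → Ordinal.{u} := fun n => x n.down with hy
    set δ : Ordinal.{u} := ⨆ i, y i with hδ
    have hle : ∀ n, x n ≤ δ := fun n => Ordinal.le_iSup y ⟨n⟩
    have hlt : ∀ {b}, b < δ → ∃ n, b < x n :=
      fun h => (Ordinal.lt_iSup_iff.1 h).elim fun n hn => ⟨n.down, hn⟩
    have hδω : δ < omegaOne := by
      rw [hδ]
      refine Ordinal.iSup_lt_ord ?_ fun n => xlt n.down
      rw [show omegaOne = (Cardinal.aleph 1).ord from rfl, Cardinal.isRegular_aleph_one.cof_eq,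
        Cardinal.mk_uLift, Cardinal.mk_nat, Cardinal.lift_aleph0]
      exact Cardinal.aleph0_lt_aleph_one
    have hδne : δ ≠ 0 := by
      have : (0 : Ordinal) ≤ x 0 := zero_le
      exact ne_of_gt (lt_of_le_of_lt (this.trans (xmono 0).le) (lt_of_lt_of_le (xmono 1) (hle 2)))
    have happ : ∀ b < δ, ∃ n, b < x n := fun b hb => hlt hb
    refine ⟨δ, ⟨?_, ?_⟩, lt_of_lt_of_le (xmono 0) (hle 1)⟩
    · refine hCc δ hδne hδω ?_
      intro b hb
      obtain ⟨n, hn⟩ := happ b hb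
      obtain ⟨c, hc, hc1, hc2⟩ := (step (x n) (xlt n)).2.2
      exact ⟨c, hc, lt_trans hn hc1, lt_of_lt_of_le (by rw [← xs n] at hc2; exact hc2) (hle (n+1))⟩
    · refine hDc δ hδne hδω ?_
      intro b hb
      obtain ⟨n, hn⟩ := happ b hb
      refine ⟨x (n + 1), by rw [xs]; exact (step (x n) (xlt n)).1,
        lt_trans hn (xmono n), lt_of_lt_of_le (xmono (n+1)) (hle (n+2))⟩
  · intro δ h0 hω happ
    refine ⟨hCc δ h0 hω ?_, hDc δ h0 hω ?_⟩
    · intro a haδ; obtain ⟨b, hb, h1, h2⟩ := happ a haδ; exact ⟨b, hb.1, h1, h2⟩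
    · intro a haδ; obtain ⟨b, hb, h1, h2⟩ := happ a haδ; exact ⟨b, hb.2, h1, h2⟩

/-- Lemma 2.1(1): under A1–A5, if ρ̄ ⊴ η̄ is avoidable then dom(ρ̄) is S̄-small. -/
theorem stmt11 (S : Ordinal → Set Ordinal) (η : Ladder) (χ : Ordinal → Ladder)
    (hA : CondA S η χ) (ρ : Ladder) (hsub : Subladder ρ η) (hav : Avoidable ρ) :
    SSmall S ρ.dom := by
  by_contra hsmall
  obtain ⟨hS1, _hS2, _hA1, _hA2, hA3, _hA4, hA5⟩ := hA
  have hXsub : ρ.dom ⊆ omegaOneSet := fun δ hδ => ρ.dom_lt δ hδ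
  obtain ⟨i, hi, hSi, hsub2⟩ := hA5 ρ.dom hXsub hsmall ρ rfl hsub
  obtain ⟨hdom, _, hsg, _⟩ := hA3 i hi
  obtain ⟨Cav, hCclub, N, hN, hfin⟩ := hav
  obtain ⟨E, hEclub, hE⟩ := hsg Cav hCclub
  obtain ⟨D, hDclub, hDdom, hD⟩ := hsub2
  have : ∃ M, IsClubSet M ∧ (N ∩ M) = ∅ := by
    by_contra hcon
    push_neg at hcon
    exact hN fun Cl hCl => hcon Cl hCl
  obtain ⟨M, hMclub, hMN⟩ := this
  obtain ⟨δ, hδS, hδDEM⟩ := (hS1 i hi).2 (D ∩ (E ∩ M)) (isClub_inter hDclub (isClub_inter hEclub hMclub))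
  have hδχ : δ ∈ (χ i).dom := by rw [hdom]; exact hδS
  have hδD : δ ∈ D := hδDEM.1
  have hδE : δ ∈ E := hδDEM.2.1
  have hδM : δ ∈ M := hδDEM.2.2
  have hδρ : δ ∈ ρ.dom := hDdom ⟨hδD, hδχ⟩
  have hδN : δ ∉ N := fun hmem => Set.eq_empty_iff_forall_notMem.1 hMN δ ⟨hmem, hδM⟩
  have h1 : ((χ i).lad δ \ Cav).Finite := hE δ ⟨hδE, hδχ⟩
  have h2 : ((χ i).lad δ \ ρ.lad δ).Finite := hD δ ⟨hδD, hδχ⟩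
  have h3 : (ρ.lad δ ∩ Cav).Finite := hfin δ hδρ hδN
  have hfin' : ((χ i).lad δ).Finite := by
    have : (χ i).lad δ ⊆ ((χ i).lad δ \ Cav) ∪ (((χ i).lad δ \ ρ.lad δ) ∪ (ρ.lad δ ∩ Cav)) := by
      intro y hy
      by_cases hyC : y ∈ Cav
      · by_cases hyρ : y ∈ ρ.lad δ
        · exact Or.inr (Or.inr ⟨hyρ, hyC⟩)
        · exact Or.inr (Or.inl ⟨hy, hyρ⟩)
      · exact Or.inl ⟨hy, hyC⟩
    exact ((h1.union (h2.union h3)).subset this)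
  exact (Set.infinite_range_of_injective ((χ i).mono δ hδχ).injective) hfin'
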